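/- arXiv:math/0702110 — 4 statements merged into one kernel-verified Lean document; each statement's English description precedes it below -/
import Mathlib

section
/- Let Φ_{n,k} be the set of self-orthogonal k-dimensional subspaces of F_2^n. If n is odd, then |Φ_{n,k}| = (∏_{j=1}^{k} (2^{n+1-2j} - 1)) / (∏_{j=1}^{k} (2^j - 1)). -/
open LinearMap Module Submodule

namespace Stmt8Aux

/-! ### Generic counting lemmas -/

lemma zmod2_mul_self (a : ZMod 2) : a * a = a := by fin_cases a <;> rfl

lemma zmod2_ne_zero {a : ZMod 2} (h : a ≠ 0) : a = 1 := by fin_cases a <;> [exact absurd rfl h; rfl]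

lemma nat_card_ne {α : Type*} [Finite α] (a : α) : Nat.card {x : α // x ≠ a} = Nat.card α - 1 := by
  classical
  letI := Fintype.ofFinite α
  simp only [Nat.card_eq_fintype_card]
  rw [Fintype.card_subtype_compl (· = a), Fintype.card_subtype_eq]

lemma nat_card_sigma_const {ι : Type*} [Finite ι] (g : ι → Type*) [∀ i, Finite (g i)] (m : ℕ)
    (h : ∀ i, Nat.card (g i) = m) : Nat.card (Σ i, g i) = Nat.card ι * m := by
  letI := Fintype.ofFinite ι
  letI : ∀ i, Fintype (g i) := fun i => Fintype.ofFinite _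
  simp only [Nat.card_eq_fintype_card, Fintype.card_sigma]
  have hm : ∀ i, Fintype.card (g i) = m := fun i => by rw [← Nat.card_eq_fintype_card, h]
  simp [hm, Finset.sum_const, Finset.card_univ, mul_comm]

lemma nat_card_of_fibers {α β : Type*} [Finite α] [Finite β] (f : α → β) (m : ℕ)
    (h : ∀ b, Nat.card {a // f a = b} = m) : Nat.card α = Nat.card β * m := by
  rw [← Nat.card_congr (Equiv.sigmaFiberEquiv f)]
  exact nat_card_sigma_const _ m h

section Generic

variable {M : Type*} [AddCommGroup M] [Module (ZMod 2) M] [Finite M]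

lemma card_submodule' (A : Submodule (ZMod 2) M) : Nat.card A = 2 ^ finrank (ZMod 2) A := by
  letI := Fintype.ofFinite A
  rw [Nat.card_eq_fintype_card, card_eq_pow_finrank (K := ZMod 2), ZMod.card]

lemma card_diff (A B : Submodule (ZMod 2) M) (h : B ≤ A) :
    Nat.card {x : M // x ∈ A ∧ x ∉ B} =
      2 ^ finrank (ZMod 2) A - 2 ^ finrank (ZMod 2) B := by
  classical
  have e1 : {x : M // x ∈ A ∧ x ∉ B} ≃ {x : A // (x : M) ∉ B} :=
    ⟨fun p => ⟨⟨p.1, p.2.1⟩, p.2.2⟩, fun q => ⟨q.1, q.1.2, q.2⟩,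
      fun p => rfl, fun q => rfl⟩
  have e2 : {x : A // (x : M) ∈ B} ≃ B :=
    ⟨fun q => ⟨q.1, q.2⟩, fun b => ⟨⟨b.1, h b.2⟩, b.2⟩, fun q => rfl, fun b => rfl⟩
  letI := Fintype.ofFinite A
  rw [Nat.card_congr e1, Nat.card_eq_fintype_card]
  rw [Fintype.card_subtype_compl (fun x : A => (x : M) ∈ B)]
  rw [← Nat.card_eq_fintype_card (α := A), ← Nat.card_eq_fintype_card,
    Nat.card_congr e2, card_submodule', card_submodule']

end Generic

section Hyperplanes

variable {W : Type*} [AddCommGroup W] [Module (ZMod 2) W] [Module.Finite (ZMod 2) W] [Finite W]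

lemma card_hyperplanes (k : ℕ) (hW : finrank (ZMod 2) W = k + 1) :
    Nat.card {D : Submodule (ZMod 2) W // finrank (ZMod 2) D = k} = 2 ^ (k + 1) - 1 := by
  have hdual : Finite (W →ₗ[ZMod 2] ZMod 2) :=
    Finite.of_injective _ (DFunLike.coe_injective (F := W →ₗ[ZMod 2] ZMod 2))
  have key : ∀ f : W →ₗ[ZMod 2] ZMod 2, f ≠ 0 → finrank (ZMod 2) (ker f) = k := by
    intro f hf
    have h1 : finrank (ZMod 2) (range f) = 1 := by
      have hle : finrank (ZMod 2) (range f) ≤ 1 := by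
        simpa using (range f).finrank_le
      have hne : range f ≠ ⊥ := by
        simp only [ne_eq, LinearMap.range_eq_bot]
        exact hf
      have hpos : 0 < finrank (ZMod 2) (range f) := by
        rcases Nat.eq_zero_or_pos (finrank (ZMod 2) (range f)) with h | h
        · exact absurd (Submodule.finrank_eq_zero.mp h) hne
        · exact h
      omega
    have := f.finrank_range_add_finrank_ker
    rw [h1, hW] at this
    omega
  let Φ : {f : W →ₗ[ZMod 2] ZMod 2 // f ≠ 0} → {D : Submodule (ZMod 2) W // finrank (ZMod 2) D = k} :=
    fun f => ⟨ker f.1, key f.1 f.2⟩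
  have hbij : Function.Bijective Φ := by
    constructor
    · rintro ⟨f, hf⟩ ⟨g, hg⟩ h
      simp only [Φ, Subtype.mk.injEq] at h ⊢
      ext x
      by_cases hx : x ∈ ker f
      · have hx' : x ∈ ker g := h ▸ hx
        rw [mem_ker.mp hx, mem_ker.mp hx']
      · have hx' : x ∉ ker g := h ▸ hx
        have h1 : f x = 1 := zmod2_ne_zero (by simpa using hx)
        have h2 : g x = 1 := zmod2_ne_zero (by simpa using hx')
        rw [h1, h2]
    · rintro ⟨D, hD⟩
      have hq : finrank (ZMod 2) (W ⧸ D) = 1 := by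
        have := D.finrank_quotient_add_finrank
        rw [hW, hD] at this
        omega
      let b : Basis (Fin 1) (ZMod 2) (W ⧸ D) := Module.finBasisOfFinrankEq _ _ hq
      let e : (W ⧸ D) ≃ₗ[ZMod 2] ZMod 2 :=
        b.equivFun.trans (LinearEquiv.funUnique (Fin 1) (ZMod 2) (ZMod 2))
      let f : W →ₗ[ZMod 2] ZMod 2 := e.toLinearMap.comp D.mkQ
      have hker : ker f = D := by
        rw [show ker f = comap D.mkQ (ker e.toLinearMap) from LinearMap.ker_comp _ _,
          LinearEquiv.ker, Submodule.comap_bot, Submodule.ker_mkQ]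
      have hf : f ≠ 0 := by
        intro h0
        rw [h0, LinearMap.ker_zero] at hker
        rw [← hker] at hD
        rw [finrank_top] at hD
        rw [hW] at hD
        omega
      exact ⟨⟨f, hf⟩, by simp only [Φ, Subtype.mk.injEq]; exact hker⟩
  rw [← Nat.card_congr (Equiv.ofBijective Φ hbij), nat_card_ne]
  have : Nat.card (W →ₗ[ZMod 2] ZMod 2) = 2 ^ (k + 1) := by
    letI := Fintype.ofFinite (W →ₗ[ZMod 2] ZMod 2)
    rw [Nat.card_eq_fintype_card, card_eq_pow_finrank (K := ZMod 2), ZMod.card,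
      Subspace.dual_finrank_eq, hW]
  rw [this]

end Hyperplanes

/-! ### The bilinear form -/

noncomputable def Bf (n : ℕ) : LinearMap.BilinForm (ZMod 2) (Fin n → ZMod 2) := Matrix.toBilin' 1

section BfBasics

variable {n : ℕ}

lemma Bf_apply (x y : Fin n → ZMod 2) : Bf n x y = ∑ i, x i * y i := by
  simp [Bf, Matrix.toBilin'_apply', dotProduct]

lemma Bf_symm : (Bf n).IsSymm := ⟨fun x y => by
  simp [Bf, Matrix.toBilin'_apply', dotProduct, mul_comm]⟩

lemma Bf_refl : (Bf n).IsRefl := (Bf_symm).isRefl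

lemma Bf_nondeg : (Bf n).Nondegenerate := by
  refine (LinearMap.IsRefl.nondegenerate_iff_separatingLeft Bf_refl).mpr ?_
  intro x hx
  funext i
  have := hx (Pi.single i 1)
  rw [Bf_apply] at this
  simpa [Pi.single_apply] using this

lemma finrank_orth (W : Submodule (ZMod 2) (Fin n → ZMod 2)) :
    finrank (ZMod 2) ((Bf n).orthogonal W) = n - finrank (ZMod 2) W := by
  rw [LinearMap.BilinForm.finrank_orthogonal Bf_nondeg]
  simp

def SO (C : Submodule (ZMod 2) (Fin n → ZMod 2)) : Prop :=
  ∀ x ∈ C, ∀ y ∈ C, ∑ i, x i * y i = 0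

lemma so_iff (C : Submodule (ZMod 2) (Fin n → ZMod 2)) :
    SO C ↔ C ≤ (Bf n).orthogonal C := by
  constructor
  · intro h x hx y hy
    show Bf n y x = 0
    rw [Bf_apply]
    exact h y hy x hx
  · intro h x hx y hy
    have : Bf n x y = 0 := h hy x hx
    rwa [Bf_apply] at this

lemma so_mono {C C' : Submodule (ZMod 2) (Fin n → ZMod 2)} (h : C' ≤ C) (hC : SO C) : SO C' :=
  fun x hx y hy => hC x (h hx) y (h hy)

lemma orth_sup (A B : Submodule (ZMod 2) (Fin n → ZMod 2)) :
    (Bf n).orthogonal (A ⊔ B) = (Bf n).orthogonal A ⊓ (Bf n).orthogonal B := by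
  apply le_antisymm
  · exact le_inf (LinearMap.BilinForm.orthogonal_le le_sup_left)
      (LinearMap.BilinForm.orthogonal_le le_sup_right)
  · rintro m ⟨hA, hB⟩ v hv
    have : A ⊔ B ≤ LinearMap.ker ((Bf n).flip m) := by
      apply sup_le
      · intro a ha; simpa using hA a ha
      · intro b hb; simpa using hB b hb
    simpa using this hv

lemma span_le_orth_iff (x : Fin n → ZMod 2) (N : Submodule (ZMod 2) (Fin n → ZMod 2)) :
    (span (ZMod 2) {x} ≤ (Bf n).orthogonal N) ↔ x ∈ (Bf n).orthogonal N := by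
  rw [span_le, Set.singleton_subset_iff]; rfl

lemma le_orth_comm {A B : Submodule (ZMod 2) (Fin n → ZMod 2)}
    (h : A ≤ (Bf n).orthogonal B) : B ≤ (Bf n).orthogonal A :=
  fun b hb a ha => Bf_refl b a (h ha b hb)

lemma mem_orth_span_self {x : Fin n → ZMod 2} (hx : Bf n x x = 0) :
    x ∈ (Bf n).orthogonal (span (ZMod 2) {x}) := by
  intro y hy
  obtain ⟨t, rfl⟩ := mem_span_singleton.mp hy
  show Bf n (t • x) x = 0
  rw [map_smul]
  simp only [LinearMap.smul_apply, hx, smul_zero]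

/-! ### The all-ones vector and the even-weight hyperplane -/

def uu (n : ℕ) : Fin n → ZMod 2 := fun _ => 1

noncomputable def Ee (n : ℕ) : Submodule (ZMod 2) (Fin n → ZMod 2) :=
  (Bf n).orthogonal (span (ZMod 2) {uu n})

lemma mem_Ee_iff (x : Fin n → ZMod 2) : x ∈ Ee n ↔ Bf n x x = 0 := by
  have hux : Bf n (uu n) x = Bf n x x := by
    simp [Bf_apply, uu, zmod2_mul_self]
  constructor
  · intro h
    rw [← hux]
    exact h (uu n) (mem_span_singleton_self _)
  · intro h y hy
    obtain ⟨t, rfl⟩ := mem_span_singleton.mp hy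
    show Bf n (t • uu n) x = 0
    rw [map_smul]
    simp only [LinearMap.smul_apply, hux, h, smul_zero]

lemma Bf_uu (hn : Odd n) : Bf n (uu n) (uu n) = 1 := by
  rw [Bf_apply]
  simp only [uu, mul_one]
  rw [Finset.sum_const, Finset.card_univ, Fintype.card_fin, nsmul_eq_mul, mul_one]
  have : (n : ZMod 2) = ((n % 2 : ℕ) : ZMod 2) := (ZMod.natCast_mod n 2).symm
  rw [this, Nat.odd_iff.mp hn]
  rfl

lemma so_le_Ee {C : Submodule (ZMod 2) (Fin n → ZMod 2)} (hC : SO C) : C ≤ Ee n := by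
  intro x hx
  rw [mem_Ee_iff, Bf_apply]
  exact hC x hx x hx

lemma uu_not_mem (hn : Odd n) {C : Submodule (ZMod 2) (Fin n → ZMod 2)} (hC : SO C) :
    uu n ∉ C := by
  intro h
  have h0 : Bf n (uu n) (uu n) = 0 := by
    rw [Bf_apply]
    exact hC _ h _ h
  rw [Bf_uu hn] at h0
  exact one_ne_zero h0

lemma finrank_sup_span {C : Submodule (ZMod 2) (Fin n → ZMod 2)} {x : Fin n → ZMod 2}
    (hx : x ∉ C) :
    finrank (ZMod 2) (C ⊔ span (ZMod 2) {x} : Submodule (ZMod 2) (Fin n → ZMod 2)) =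
      finrank (ZMod 2) C + 1 := by
  have hx0 : x ≠ 0 := fun h => hx (h ▸ C.zero_mem)
  have hinf : C ⊓ span (ZMod 2) {x} = ⊥ := by
    rw [eq_bot_iff]
    rintro y ⟨hyC, hyx⟩
    obtain ⟨t, rfl⟩ := mem_span_singleton.mp hyx
    rcases eq_or_ne t 0 with rfl | ht
    · simp
    · rw [zmod2_ne_zero ht, one_smul] at hyC
      exact absurd hyC hx
  have := Submodule.finrank_sup_add_finrank_inf_eq C (span (ZMod 2) {x})
  rw [hinf, finrank_bot, add_zero, finrank_span_singleton hx0] at this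
  omega

lemma dim_D (hn : Odd n) {C : Submodule (ZMod 2) (Fin n → ZMod 2)} (hC : SO C) :
    finrank (ZMod 2) ((Bf n).orthogonal C ⊓ Ee n : Submodule (ZMod 2) (Fin n → ZMod 2)) =
      n - (finrank (ZMod 2) C + 1) := by
  have : (Bf n).orthogonal C ⊓ Ee n = (Bf n).orthogonal (C ⊔ span (ZMod 2) {uu n}) := by
    rw [orth_sup]; rfl
  rw [this, finrank_orth, finrank_sup_span (uu_not_mem hn hC)]

lemma so_le_D {C' C : Submodule (ZMod 2) (Fin n → ZMod 2)} (h : C' ≤ C) (hC : SO C) :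
    C ≤ (Bf n).orthogonal C' ⊓ Ee n :=
  le_inf (le_trans ((so_iff C).mp hC) (LinearMap.BilinForm.orthogonal_le h)) (so_le_Ee hC)

lemma so_rank_bound (hn : Odd n) {C : Submodule (ZMod 2) (Fin n → ZMod 2)} (hC : SO C) :
    2 * finrank (ZMod 2) C + 1 ≤ n := by
  have h1 : finrank (ZMod 2) C ≤ n - (finrank (ZMod 2) C + 1) := by
    rw [← dim_D hn hC]
    exact Submodule.finrank_mono (so_le_D le_rfl hC)
  have h2 : finrank (ZMod 2) C + 1 ≤ n := by
    rw [← finrank_sup_span (uu_not_mem hn hC)]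
    simpa using Submodule.finrank_le (C ⊔ span (ZMod 2) {uu n} : Submodule (ZMod 2) (Fin n → ZMod 2))
  omega

end BfBasics

section Counting

variable {n : ℕ}

abbrev A (n k : ℕ) :=
  {C : Submodule (ZMod 2) (Fin n → ZMod 2) //
    Module.finrank (ZMod 2) C = k ∧ ∀ x ∈ C, ∀ y ∈ C, ∑ i, x i * y i = 0}

lemma A_so {k : ℕ} (C : A n k) : SO C.1 := C.2.2

lemma count1 (k : ℕ) (C : A n (k + 1)) :
    Nat.card {C' : A n k // C'.1 ≤ C.1} = 2 ^ (k + 1) - 1 := by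
  have hC := C.2.1
  let e : {C' : A n k // C'.1 ≤ C.1} ≃ {D : Submodule (ZMod 2) C.1 // finrank (ZMod 2) D = k} :=
    { toFun := fun q => ⟨comap C.1.subtype q.1.1, by
        have h1 := Submodule.finrank_map_subtype_eq C.1 (comap C.1.subtype q.1.1)
        rw [Submodule.map_comap_subtype, inf_eq_right.mpr q.2] at h1
        rw [← h1]; exact q.1.2.1⟩
      invFun := fun D => ⟨⟨map C.1.subtype D.1, by
          rw [Submodule.finrank_map_subtype_eq, D.2]
        , so_mono (map_subtype_le C.1 D.1) (A_so C)⟩, map_subtype_le C.1 D.1⟩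
      left_inv := fun q => by
        apply Subtype.ext; apply Subtype.ext
        show map C.1.subtype (comap C.1.subtype q.1.1) = q.1.1
        rw [Submodule.map_comap_subtype, inf_eq_right.mpr q.2]
      right_inv := fun D => by
        apply Subtype.ext
        show comap C.1.subtype (map C.1.subtype D.1) = D.1
        exact Submodule.comap_map_eq_of_injective C.1.injective_subtype D.1 }
  rw [Nat.card_congr e, card_hyperplanes k hC]

lemma count2 (hn : Odd n) (k : ℕ) (C' : A n k) :
    Nat.card {C : A n (k + 1) // C'.1 ≤ C.1} = 2 ^ (n - (2 * k + 1)) - 1 := by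
  have hso' : SO C'.1 := A_so C'
  have hk' : finrank (ZMod 2) C'.1 = k := C'.2.1
  have hbound : 2 * k + 1 ≤ n := by
    have := so_rank_bound hn hso'
    rw [hk'] at this
    exact this
  set DD : Submodule (ZMod 2) (Fin n → ZMod 2) := (Bf n).orthogonal C'.1 ⊓ Ee n with hDD
  have hdimD : finrank (ZMod 2) DD = n - (k + 1) := by
    rw [hDD, dim_D hn hso', hk']
  have hCD : C'.1 ≤ DD := so_le_D le_rfl hso'
  -- the extension map
  have hsup : ∀ x : Fin n → ZMod 2, x ∈ DD → x ∉ C'.1 →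
      finrank (ZMod 2) (C'.1 ⊔ span (ZMod 2) {x} : Submodule (ZMod 2) (Fin n → ZMod 2)) = k + 1 ∧
        SO (C'.1 ⊔ span (ZMod 2) {x} : Submodule (ZMod 2) (Fin n → ZMod 2)) := by
    intro x hxD hxC
    obtain ⟨hx1, hx2⟩ : x ∈ (Bf n).orthogonal C'.1 ∧ x ∈ Ee n := hxD
    constructor
    · rw [finrank_sup_span hxC, hk']
    · rw [so_iff, orth_sup]
      apply le_inf
      · apply sup_le ((so_iff C'.1).mp hso')
        exact (span_le_orth_iff x C'.1).mpr hx1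
      · apply sup_le (le_orth_comm ((span_le_orth_iff x C'.1).mpr hx1))
        exact (span_le_orth_iff x _).mpr (mem_orth_span_self ((mem_Ee_iff x).mp hx2))
  let X := {x : Fin n → ZMod 2 // x ∈ DD ∧ x ∉ C'.1}
  let g : X → {C : A n (k + 1) // C'.1 ≤ C.1} := fun x =>
    ⟨⟨C'.1 ⊔ span (ZMod 2) {x.1}, (hsup x.1 x.2.1 x.2.2).1, (hsup x.1 x.2.1 x.2.2).2⟩,
      le_sup_left⟩
  have hfib : ∀ b : {C : A n (k + 1) // C'.1 ≤ C.1},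
      Nat.card {x : X // g x = b} = 2 ^ k := by
    intro b
    have hbC : finrank (ZMod 2) b.1.1 = k + 1 := b.1.2.1
    have hbso : SO b.1.1 := A_so b.1
    have hbmem : ∀ y : Fin n → ZMod 2, y ∈ b.1.1 → y ∉ C'.1 → y ∈ DD ∧ y ∉ C'.1 := by
      intro y hy hyC
      refine ⟨⟨?_, ?_⟩, hyC⟩
      · intro c hc
        show Bf n c y = 0
        rw [Bf_apply]
        exact hbso c (b.2 hc) y hy
      · show y ∈ Ee n
        rw [mem_Ee_iff, Bf_apply]
        exact hbso y hy y hy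
    let ψ : {x : X // g x = b} → {y : Fin n → ZMod 2 // y ∈ b.1.1 ∧ y ∉ C'.1} := by
      refine fun p => ⟨p.1.1, ?_, p.1.2.2⟩
      have : p.1.1 ∈ (g p.1).1.1 := by
        show p.1.1 ∈ C'.1 ⊔ span (ZMod 2) {p.1.1}
        exact (le_sup_right : span (ZMod 2) {p.1.1} ≤ C'.1 ⊔ span (ZMod 2) {p.1.1})
          (subset_span rfl)
      rwa [p.2] at this
    have hψ : Function.Bijective ψ := by
      constructor
      · rintro ⟨⟨x, hx⟩, hgx⟩ ⟨⟨x', hx'⟩, hgx'⟩ h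
        simp only [ψ, Subtype.mk.injEq] at h
        apply Subtype.ext; apply Subtype.ext; exact h
      · rintro ⟨y, hy, hyC⟩
        have hyX := hbmem y hy hyC
        refine ⟨⟨⟨y, hyX⟩, ?_⟩, rfl⟩
        apply Subtype.ext; apply Subtype.ext
        show C'.1 ⊔ span (ZMod 2) {y} = b.1.1
        apply Submodule.eq_of_le_of_finrank_le
        · exact sup_le b.2 ((span_le.mpr (Set.singleton_subset_iff.mpr hy)))
        · rw [hbC, finrank_sup_span hyC, hk']
    rw [Nat.card_congr (Equiv.ofBijective ψ hψ), card_diff b.1.1 C'.1 b.2, hbC, hk', pow_succ]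
    omega
  have hX : Nat.card X = Nat.card {C : A n (k + 1) // C'.1 ≤ C.1} * 2 ^ k :=
    nat_card_of_fibers g (2 ^ k) hfib
  have hX2 : Nat.card X = 2 ^ (n - (k + 1)) - 2 ^ k := by
    rw [show Nat.card X = Nat.card {x : Fin n → ZMod 2 // x ∈ DD ∧ x ∉ C'.1} from rfl,
      card_diff DD C'.1 hCD, hdimD, hk']
  have hpow : 2 ^ (n - (k + 1)) = 2 ^ k * 2 ^ (n - (2 * k + 1)) := by
    rw [← pow_add]
    congr 1
    omega
  have : Nat.card {C : A n (k + 1) // C'.1 ≤ C.1} * 2 ^ k =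
      (2 ^ (n - (2 * k + 1)) - 1) * 2 ^ k := by
    rw [← hX, hX2, hpow, Nat.sub_mul, one_mul,
      mul_comm (2 ^ (n - (2 * k + 1))) (2 ^ k)]
  exact Nat.eq_of_mul_eq_mul_right (Nat.pow_pos (n := k) (by norm_num)) this

lemma recursion (hn : Odd n) (k : ℕ) :
    Nat.card (A n (k + 1)) * (2 ^ (k + 1) - 1) =
      Nat.card (A n k) * (2 ^ (n - (2 * k + 1)) - 1) := by
  let e : (Σ C : A n (k + 1), {C' : A n k // C'.1 ≤ C.1}) ≃
      (Σ C' : A n k, {C : A n (k + 1) // C'.1 ≤ C.1}) :=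
    { toFun := fun p => ⟨p.2.1, p.1, p.2.2⟩
      invFun := fun p => ⟨p.2.1, p.1, p.2.2⟩
      left_inv := fun p => rfl
      right_inv := fun p => rfl }
  have h1 : Nat.card (Σ C : A n (k + 1), {C' : A n k // C'.1 ≤ C.1}) =
      Nat.card (A n (k + 1)) * (2 ^ (k + 1) - 1) :=
    nat_card_sigma_const _ _ (count1 k)
  have h2 : Nat.card (Σ C' : A n k, {C : A n (k + 1) // C'.1 ≤ C.1}) =
      Nat.card (A n k) * (2 ^ (n - (2 * k + 1)) - 1) :=
    nat_card_sigma_const _ _ (count2 hn k)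
  rw [← h1, ← h2, Nat.card_congr e]

lemma base_case : Nat.card (A n 0) = 1 := by
  rw [Nat.card_eq_one_iff_unique]
  constructor
  · constructor
    intro C C'
    apply Subtype.ext
    rw [Submodule.finrank_eq_zero.mp C.2.1, Submodule.finrank_eq_zero.mp C'.2.1]
  · refine ⟨⟨⊥, finrank_bot _ _, ?_⟩⟩
    intro x hx y hy
    rw [Submodule.mem_bot] at hx
    subst hx
    simp

lemma main_nat (hn : Odd n) (k : ℕ) :
    Nat.card (A n k) * ∏ j ∈ Finset.Icc 1 k, (2 ^ j - 1) =
      ∏ j ∈ Finset.Icc 1 k, (2 ^ (n + 1 - 2 * j) - 1) := by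
  induction k with
  | zero => simp [base_case]
  | succ k ih =>
    rw [Finset.prod_Icc_succ_top (Nat.le_add_left 1 k),
      Finset.prod_Icc_succ_top (Nat.le_add_left 1 k)]
    have hexp : n + 1 - 2 * (k + 1) = n - (2 * k + 1) := by omega
    rw [hexp]
    calc Nat.card (A n (k + 1)) * ((∏ j ∈ Finset.Icc 1 k, (2 ^ j - 1)) * (2 ^ (k + 1) - 1))
        = (Nat.card (A n (k + 1)) * (2 ^ (k + 1) - 1)) * ∏ j ∈ Finset.Icc 1 k, (2 ^ j - 1) := by
          ring
      _ = (Nat.card (A n k) * (2 ^ (n - (2 * k + 1)) - 1)) *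
            ∏ j ∈ Finset.Icc 1 k, (2 ^ j - 1) := by rw [recursion hn k]
      _ = (Nat.card (A n k) * ∏ j ∈ Finset.Icc 1 k, (2 ^ j - 1)) *
            (2 ^ (n - (2 * k + 1)) - 1) := by ring
      _ = (∏ j ∈ Finset.Icc 1 k, (2 ^ (n + 1 - 2 * j) - 1)) * (2 ^ (n - (2 * k + 1)) - 1) := by
          rw [ih]

end Counting

end Stmt8Aux

theorem stmt8 (n k : ℕ) (hn : Odd n) :
    (Nat.card {C : Submodule (ZMod 2) (Fin n → ZMod 2) //
        Module.finrank (ZMod 2) C = k ∧ ∀ x ∈ C, ∀ y ∈ C, ∑ i, x i * y i = 0} : ℚ) =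
      (∏ j ∈ Finset.Icc 1 k, ((2 : ℚ) ^ (n + 1 - 2 * j) - 1)) /
        (∏ j ∈ Finset.Icc 1 k, ((2 : ℚ) ^ j - 1)) := by
  have hden : (∏ j ∈ Finset.Icc 1 k, ((2 : ℚ) ^ j - 1)) ≠ 0 := by
    apply Finset.prod_ne_zero_iff.mpr
    intro j hj
    have hj1 : 1 ≤ j := (Finset.mem_Icc.mp hj).1
    have : (1 : ℚ) < 2 ^ j := one_lt_pow₀ (by norm_num) (by omega)
    intro h
    rw [sub_eq_zero] at h
    linarith
  rw [eq_div_iff hden]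
  have hnat := Stmt8Aux.main_nat hn k
  have cast1 : ∏ j ∈ Finset.Icc 1 k, ((2 : ℚ) ^ j - 1) =
      ((∏ j ∈ Finset.Icc 1 k, (2 ^ j - 1) : ℕ) : ℚ) := by
    rw [Nat.cast_prod]
    apply Finset.prod_congr rfl
    intro j hj
    rw [Nat.cast_sub Nat.one_le_two_pow]
    push_cast
    ring
  have cast2 : ∏ j ∈ Finset.Icc 1 k, ((2 : ℚ) ^ (n + 1 - 2 * j) - 1) =
      ((∏ j ∈ Finset.Icc 1 k, (2 ^ (n + 1 - 2 * j) - 1) : ℕ) : ℚ) := by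
    rw [Nat.cast_prod]
    apply Finset.prod_congr rfl
    intro j hj
    rw [Nat.cast_sub Nat.one_le_two_pow]
    push_cast
    ring
  rw [cast1, cast2, ← Nat.cast_mul, ← hnat, Nat.cast_mul]
end

section
/- Let S_{k×n} = {X ∈ M_{k×n}(F_2) : X X^T = 0} and Φ_{n,l} the set of l-dimensional self-orthogonal subspaces of F_2^n. Then |S_{k×n}| = Σ_{0 ≤ l ≤ min(k, n/2)} |Φ_{n,l}| · 2^{l(l-1)/2} · ∏_{j=k-l+1}^{k} (2^j - 1). -/
open Matrix Module Submodule Finset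

namespace Stmt9Aux

noncomputable def dotB (n : ℕ) : LinearMap.BilinForm (ZMod 2) (Fin n → ZMod 2) :=
  LinearMap.mk₂ (ZMod 2) (fun x y => ∑ i, x i * y i)
    (fun x x' y => by simp [add_mul, Finset.sum_add_distrib])
    (fun c x y => by simp [Finset.mul_sum, mul_assoc])
    (fun x y y' => by simp [mul_add, Finset.sum_add_distrib])
    (fun c x y => by simp [Finset.mul_sum, mul_left_comm])

lemma dotB_apply {n : ℕ} (x y : Fin n → ZMod 2) : dotB n x y = ∑ i, x i * y i := rfl

lemma dotB_symm {n : ℕ} : (dotB n).IsSymm := by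
  refine ⟨fun x y => ?_⟩
  simp [dotB_apply, mul_comm]

lemma dotB_nondeg {n : ℕ} : (dotB n).Nondegenerate := by
  refine ⟨fun x hx => ?_, fun x hx => ?_⟩
  · funext i
    have := hx (Pi.single i 1)
    simpa [dotB_apply, Pi.single_apply, Finset.sum_ite_eq'] using this
  · funext i
    have := hx (Pi.single i 1)
    simpa [dotB_apply, Pi.single_apply, Finset.sum_ite_eq', mul_comm] using this

/-- self-orthogonality predicate -/
def SO {n : ℕ} (C : Submodule (ZMod 2) (Fin n → ZMod 2)) : Prop :=
  ∀ x ∈ C, ∀ y ∈ C, ∑ i, x i * y i = 0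

lemma so_span {n k : ℕ} (X : Fin k → (Fin n → ZMod 2))
    (h : ∀ a b, ∑ i, X a i * X b i = 0) : SO (span (ZMod 2) (Set.range X)) := by
  have h1 : ∀ a, span (ZMod 2) (Set.range X) ≤ LinearMap.ker (dotB n (X a)) := by
    intro a
    rw [span_le]
    rintro _ ⟨b, rfl⟩
    simp [LinearMap.mem_ker, dotB_apply, h a b]
  have h2 : span (ZMod 2) (Set.range X) ≤ (dotB n).orthogonal (span (ZMod 2) (Set.range X)) := by
    rw [span_le]
    rintro _ ⟨a, rfl⟩
    intro y hy
    have := h1 a hy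
    rw [LinearMap.mem_ker] at this
    exact (dotB_symm.eq _ _).symm.trans (by simpa using this)
  intro x hx y hy
  have := h2 hy x hx
  simpa [LinearMap.BilinForm.IsOrtho, dotB_apply] using this

lemma matrix_so_iff {n k : ℕ} (X : Matrix (Fin k) (Fin n) (ZMod 2)) :
    X * Xᵀ = 0 ↔ SO (span (ZMod 2) (Set.range fun a => X a)) := by
  constructor
  · intro h
    apply so_span
    intro a b
    have := congrFun (congrFun h a) b
    simpa [Matrix.mul_apply] using this
  · intro h
    ext a b
    have := h (X a) (subset_span ⟨a, rfl⟩) (X b) (subset_span ⟨b, rfl⟩)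
    simpa [Matrix.mul_apply] using this

lemma so_dim_bound {n : ℕ} {C : Submodule (ZMod 2) (Fin n → ZMod 2)} (h : SO C) :
    finrank (ZMod 2) C ≤ n / 2 := by
  have hle : C ≤ (dotB n).orthogonal C := by
    intro x hx y hy
    exact h y hy x hx
  have h1 : finrank (ZMod 2) C ≤ finrank (ZMod 2) ((dotB n).orthogonal C) :=
    Submodule.finrank_mono hle
  have h2 : finrank (ZMod 2) ((dotB n).orthogonal C)
      = finrank (ZMod 2) (Fin n → ZMod 2) - finrank (ZMod 2) C :=
    LinearMap.BilinForm.finrank_orthogonal dotB_nondeg C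
  have h3 : finrank (ZMod 2) (Fin n → ZMod 2) = n := by simp
  rw [h2, h3] at h1
  omega

end Stmt9Aux

namespace Stmt9Aux

lemma prod_id {k l : ℕ} (hl : l ≤ k) :
    ∏ i ∈ Finset.range l, (2^k - 2^i) =
      2^(l*(l-1)/2) * ∏ j ∈ Finset.Icc (k-l+1) k, (2^j - 1) := by
  have h1 : ∀ i ∈ Finset.range l, 2^k - 2^i = 2^i * (2^(k-i) - 1) := by
    intro i hi
    rw [Finset.mem_range] at hi
    rw [Nat.mul_sub, mul_one, ← pow_add]
    congr 2
    omega
  rw [Finset.prod_congr rfl h1, Finset.prod_mul_distrib]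
  congr 1
  · rw [Finset.prod_pow_eq_pow_sum, Finset.sum_range_id]
  · have himg : Finset.Icc (k-l+1) k = (Finset.range l).image (fun i => k - i) := by
      ext j
      simp only [Finset.mem_Icc, Finset.mem_image, Finset.mem_range]
      constructor
      · intro h
        exact ⟨k - j, by omega, by omega⟩
      · rintro ⟨i, hi, rfl⟩
        omega
    rw [himg, Finset.prod_image]
    intro i hi j hj hij
    rw [Finset.mem_coe, Finset.mem_range] at hi hj
    beta_reduce at hij
    omega

lemma span_top_iff_li {k l : ℕ} (v : Fin k → (Fin l → ZMod 2)) :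
    span (ZMod 2) (Set.range v) = ⊤ ↔
      LinearIndependent (ZMod 2) (fun i a => v a i) := by
  have hr : (Matrix.of v).rank = finrank (ZMod 2) (span (ZMod 2) (Set.range v)) :=
    Matrix.rank_eq_finrank_span_row (Matrix.of v)
  have hrt : (Matrix.of v)ᵀ.rank = (Matrix.of v).rank := Matrix.rank_transpose _
  constructor
  · intro h
    rw [linearIndependent_iff_card_eq_finrank_span]
    have : (Set.range fun i a => v a i) = Set.range ((Matrix.of v)ᵀ).row := rfl
    rw [this, Set.finrank, ← Matrix.rank_eq_finrank_span_row, hrt, hr, h]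
    simp
  · intro h
    apply Submodule.eq_top_of_finrank_eq
    rw [linearIndependent_iff_card_eq_finrank_span] at h
    have : (Set.range fun i a => v a i) = Set.range ((Matrix.of v)ᵀ).row := rfl
    rw [this, Set.finrank, ← Matrix.rank_eq_finrank_span_row, hrt, hr] at h
    simp at h ⊢
    omega

lemma card_span_top {k l : ℕ} (hl : l ≤ k) :
    Nat.card {v : Fin k → (Fin l → ZMod 2) // span (ZMod 2) (Set.range v) = ⊤} =
      ∏ i ∈ Finset.range l, (2^k - 2^i) := by
  have e1 : {v : Fin k → (Fin l → ZMod 2) // span (ZMod 2) (Set.range v) = ⊤} ≃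
      {w : Fin l → (Fin k → ZMod 2) // LinearIndependent (ZMod 2) w} :=
    { toFun := fun v => ⟨fun i a => v.1 a i, (span_top_iff_li v.1).1 v.2⟩
      invFun := fun w => ⟨fun a i => w.1 i a, (span_top_iff_li _).2 w.2⟩
      left_inv := fun v => rfl
      right_inv := fun w => rfl }
  rw [Nat.card_congr e1, card_linearIndependent (K := ZMod 2) (V := Fin k → ZMod 2) (by simpa using hl)]
  simp only [ZMod.card, finrank_pi, Fintype.card_fin]
  rw [Fin.prod_univ_eq_prod_range (fun i => 2 ^ k - 2 ^ i) l]

end Stmt9Aux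

namespace Stmt9Aux

lemma span_coe_iff {n k : ℕ} {C : Submodule (ZMod 2) (Fin n → ZMod 2)} (v : Fin k → C) :
    span (ZMod 2) (Set.range v) = ⊤ ↔
      span (ZMod 2) (Set.range fun a => (v a : Fin n → ZMod 2)) = C := by
  rw [← (Submodule.map_injective_of_injective C.injective_subtype).eq_iff,
    Submodule.map_span, Submodule.map_top, Submodule.range_subtype, ← Set.range_comp]
  rfl

lemma span_equiv_top_iff {n k l : ℕ} {C : Submodule (ZMod 2) (Fin n → ZMod 2)}
    (e : C ≃ₗ[ZMod 2] (Fin l → ZMod 2)) (v : Fin k → C) :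
    span (ZMod 2) (Set.range fun a => e (v a)) = ⊤ ↔ span (ZMod 2) (Set.range v) = ⊤ := by
  have : (Set.range fun a => e (v a)) = e.toLinearMap '' Set.range v := by
    rw [← Set.range_comp]; rfl
  rw [this, ← Submodule.map_span]
  constructor
  · intro h
    have := congrArg (Submodule.comap (e.toLinearMap)) h
    rwa [Submodule.comap_map_eq_of_injective (f := e.toLinearMap) e.injective, Submodule.comap_top] at this
  · intro h
    rw [h, Submodule.map_top, LinearEquiv.range]

lemma card_fiber {n k l : ℕ} (hl : l ≤ k) (C : Submodule (ZMod 2) (Fin n → ZMod 2))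
    (hC : finrank (ZMod 2) C = l) :
    Nat.card {X : Matrix (Fin k) (Fin n) (ZMod 2) //
        span (ZMod 2) (Set.range fun a => X a) = C} =
      ∏ i ∈ Finset.range l, (2^k - 2^i) := by
  have e : C ≃ₗ[ZMod 2] (Fin l → ZMod 2) :=
    LinearEquiv.ofFinrankEq _ _ (by simp [hC])
  have eqA : {X : Matrix (Fin k) (Fin n) (ZMod 2) //
        span (ZMod 2) (Set.range fun a => X a) = C} ≃
      {v : Fin k → C // span (ZMod 2) (Set.range v) = ⊤} :=
    { toFun := fun X => ⟨fun a => ⟨X.1 a, X.2.le (subset_span ⟨a, rfl⟩)⟩,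
        (span_coe_iff _).2 X.2⟩
      invFun := fun v => ⟨Matrix.of (fun a => (v.1 a : Fin n → ZMod 2)), (span_coe_iff _).1 v.2⟩
      left_inv := fun X => rfl
      right_inv := fun v => rfl }
  have eqB : {v : Fin k → C // span (ZMod 2) (Set.range v) = ⊤} ≃
      {w : Fin k → (Fin l → ZMod 2) // span (ZMod 2) (Set.range w) = ⊤} :=
    { toFun := fun v => ⟨fun a => e (v.1 a), (span_equiv_top_iff e v.1).2 v.2⟩
      invFun := fun w => ⟨fun a => e.symm (w.1 a), by
        have := (span_equiv_top_iff e (fun a => e.symm (w.1 a))).1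
        simp only [LinearEquiv.apply_symm_apply] at this
        exact this w.2⟩
      left_inv := fun v => by ext a; simp
      right_inv := fun w => by ext a i; simp }
  rw [Nat.card_congr (eqA.trans eqB), card_span_top hl]

end Stmt9Aux

open Stmt9Aux in
theorem stmt9 (n k : ℕ) :
    Nat.card {X : Matrix (Fin k) (Fin n) (ZMod 2) // X * Xᵀ = 0} =
      ∑ l ∈ Finset.range (min k (n / 2) + 1),
        Nat.card {C : Submodule (ZMod 2) (Fin n → ZMod 2) //
            Module.finrank (ZMod 2) C = l ∧ ∀ x ∈ C, ∀ y ∈ C, ∑ i, x i * y i = 0} *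
          2 ^ (l * (l - 1) / 2) * ∏ j ∈ Finset.Icc (k - l + 1) k, (2 ^ j - 1) := by
  classical
  haveI : Finite (Submodule (ZMod 2) (Fin n → ZMod 2)) :=
    Finite.of_injective (fun C => (C : Set (Fin n → ZMod 2))) SetLike.coe_injective
  letI : Fintype (Submodule (ZMod 2) (Fin n → ZMod 2)) := Fintype.ofFinite _
  have hS : Nat.card {X : Matrix (Fin k) (Fin n) (ZMod 2) // X * Xᵀ = 0}
      = (Finset.univ.filter fun X : Matrix (Fin k) (Fin n) (ZMod 2) => X * Xᵀ = 0).card := by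
    rw [Nat.card_eq_fintype_card, Fintype.card_subtype]
  rw [hS]
  have hmem : ∀ X ∈ (Finset.univ.filter fun X : Matrix (Fin k) (Fin n) (ZMod 2) => X * Xᵀ = 0),
      finrank (ZMod 2) (span (ZMod 2) (Set.range fun a => X a))
        ∈ Finset.range (min k (n/2) + 1) := by
    intro X hX
    rw [Finset.mem_filter] at hX
    have h1 : finrank (ZMod 2) (span (ZMod 2) (Set.range fun a => X a)) ≤ k := by
      have := finrank_range_le_card (R := ZMod 2) (fun a => X a)
      simpa [Set.finrank] using this
    have h2 := so_dim_bound ((matrix_so_iff X).1 hX.2)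
    rw [Finset.mem_range]
    omega
  rw [Finset.card_eq_sum_card_fiberwise hmem]
  refine Finset.sum_congr rfl fun l hl => ?_
  rw [Finset.mem_range] at hl
  have hlk : l ≤ k := by omega
  set s := (Finset.univ.filter fun X : Matrix (Fin k) (Fin n) (ZMod 2) => X * Xᵀ = 0).filter
      (fun X => finrank (ZMod 2) (span (ZMod 2) (Set.range fun a => X a)) = l) with hs
  set Φ := Finset.univ.filter (fun C : Submodule (ZMod 2) (Fin n → ZMod 2) =>
      finrank (ZMod 2) C = l ∧ ∀ x ∈ C, ∀ y ∈ C, ∑ i, x i * y i = 0) with hΦ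
  have hmem2 : ∀ X ∈ s, span (ZMod 2) (Set.range fun a => X a) ∈ Φ := by
    intro X hX
    simp only [hs, Finset.mem_filter, Finset.mem_univ, true_and, hΦ] at hX ⊢
    exact ⟨hX.2, (matrix_so_iff X).1 hX.1⟩
  rw [Finset.card_eq_sum_card_fiberwise hmem2]
  have hconst : ∀ C ∈ Φ, (s.filter fun X => span (ZMod 2) (Set.range fun a => X a) = C).card
      = ∏ i ∈ Finset.range l, (2^k - 2^i) := by
    intro C hC
    simp only [hΦ, Finset.mem_filter, Finset.mem_univ, true_and] at hC
    have hset : (s.filter fun X => span (ZMod 2) (Set.range fun a => X a) = C)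
        = Finset.univ.filter (fun X : Matrix (Fin k) (Fin n) (ZMod 2) =>
            span (ZMod 2) (Set.range fun a => X a) = C) := by
      ext X
      simp only [hs, Finset.mem_filter, Finset.mem_univ, true_and]
      constructor
      · tauto
      · intro h
        refine ⟨⟨?_, ?_⟩, h⟩
        · rw [matrix_so_iff, h]; exact hC.2
        · rw [h, hC.1]
    rw [hset, ← Fintype.card_subtype, ← Nat.card_eq_fintype_card]
    exact card_fiber hlk C hC.1
  rw [Finset.sum_congr rfl hconst, Finset.sum_const, smul_eq_mul, prod_id hlk, ← mul_assoc]
  congr 2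
  rw [Nat.card_eq_fintype_card, Fintype.card_subtype]
end

section
/- The number of inequivalent self-orthogonal codes in F_2^n of dimension at most 2 equals the number of triples (a_1,a_2,a_3) ∈ N^3 with 0 ≤ a_1 ≤ a_2 ≤ a_3 and a_1 + a_2 + a_3 ≤ n/2. -/
open Finset Submodule
open scoped symmDiff

namespace SO13

attribute [local instance] Classical.propDecidable

variable {n : ℕ}

abbrev V (n : ℕ) := Fin n → ZMod 2

def indic (s : Finset (Fin n)) : V n := fun i => if i ∈ s then 1 else 0

def wt (x : V n) : ℕ := (Finset.univ.filter fun i => x i = 1).card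

lemma zmod2_cases (z : ZMod 2) : z = 0 ∨ z = 1 := by revert z; decide

lemma indic_supp (x : V n) : indic (Finset.univ.filter fun i => x i = 1) = x := by
  funext i; rcases zmod2_cases (x i) with h | h <;> simp [indic, h]

lemma wt_indic (s : Finset (Fin n)) : wt (indic s) = s.card := by
  unfold wt indic
  congr 1
  ext i
  simp

lemma indic_eq_zero : (indic (∅ : Finset (Fin n))) = 0 := by
  funext i; simp [indic]

lemma indic_ne_zero {s : Finset (Fin n)} (h : s.Nonempty) : indic s ≠ 0 := by
  obtain ⟨i, hi⟩ := h
  intro hcon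
  have := congrFun hcon i
  simp [indic, hi] at this

lemma indic_add (s t : Finset (Fin n)) : indic s + indic t = indic (s ∆ t) := by
  funext i
  by_cases hs : i ∈ s <;> by_cases ht : i ∈ t <;>
    simp [indic, Finset.mem_symmDiff, hs, ht] <;> decide

lemma dot_indic (s t : Finset (Fin n)) :
    ∑ i, indic s i * indic t i = ((s ∩ t).card : ZMod 2) := by
  have h : ∀ i ∈ Finset.univ, indic s i * indic t i = if i ∈ s ∩ t then (1 : ZMod 2) else 0 := by
    intro i _
    by_cases hs : i ∈ s <;> by_cases ht : i ∈ t <;> simp [indic, hs, ht]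
  rw [Finset.sum_congr rfl h, Finset.sum_ite_mem, Finset.univ_inter, Finset.sum_const,
    nsmul_eq_mul, mul_one]


lemma add_self_eq_zero' (u : V n) : u + u = 0 := by
  funext i
  have : ∀ z : ZMod 2, z + z = 0 := by decide
  exact this (u i)

lemma span_pair_comm (u v : V n) :
    span (ZMod 2) {u, v} = span (ZMod 2) {v, u} := by
  rw [Set.pair_comm]

lemma span_pair_add (u v : V n) :
    span (ZMod 2) {u, u + v} = span (ZMod 2) {u, v} := by
  have hmem : v ∈ span (ZMod 2) {u, u + v} := by
    have h1 : u ∈ span (ZMod 2) {u, u + v} := subset_span (by simp)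
    have h2 : u + v ∈ span (ZMod 2) {u, u + v} := subset_span (by simp)
    have h := add_mem h1 h2
    rwa [← add_assoc, add_self_eq_zero', zero_add] at h
  have hmem' : u + v ∈ span (ZMod 2) {u, v} :=
    add_mem (subset_span (by simp)) (subset_span (by simp))
  apply le_antisymm
  · rw [span_le]
    rintro x (h | h) <;> rw [h]
    · exact subset_span (by simp)
    · exact hmem'
  · rw [span_le]
    rintro x (h | h) <;> rw [h]
    · exact subset_span (by simp)
    · exact hmem

lemma span_pair_add' (u v : V n) :
    span (ZMod 2) {u + v, v} = span (ZMod 2) {u, v} := by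
  rw [span_pair_comm, add_comm, span_pair_add, span_pair_comm]

lemma span_selfOrth {u v : V n} (huu : ∑ i, u i * u i = 0) (huv : ∑ i, u i * v i = 0)
    (hvv : ∑ i, v i * v i = 0) :
    ∀ x ∈ span (ZMod 2) {u, v}, ∀ y ∈ span (ZMod 2) {u, v}, ∑ i, x i * y i = 0 := by
  have hvu : ∑ i, v i * u i = 0 := by
    rw [← huv]; exact Finset.sum_congr rfl fun i _ => mul_comm _ _
  intro x hx y hy
  rw [Submodule.mem_span_pair] at hx hy
  obtain ⟨a, b, rfl⟩ := hx
  obtain ⟨c, d, rfl⟩ := hy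
  have h : ∀ i ∈ Finset.univ, (a • u + b • v) i * (c • u + d • v) i =
      a * c * (u i * u i) + a * d * (u i * v i) + b * c * (v i * u i) + b * d * (v i * v i) := by
    intro i _
    simp only [Pi.add_apply, Pi.smul_apply, smul_eq_mul]
    ring
  rw [Finset.sum_congr rfl h]
  simp only [Finset.sum_add_distrib, ← Finset.mul_sum, huu, huv, hvu, hvv, mul_zero, add_zero]

lemma finrank_span_pair_le (u v : V n) :
    Module.finrank (ZMod 2) (span (ZMod 2) {u, v}) ≤ 2 := by
  have h1 : Module.finrank (ZMod 2)
      (span (ZMod 2) ((({u, v} : Finset (V n))) : Set (V n))) ≤ ({u, v} : Finset (V n)).card :=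
    finrank_span_finset_le_card _
  have h2 : ({u, v} : Finset (V n)).card ≤ 2 :=
    le_trans (Finset.card_insert_le _ _) (by simp)
  have h3 : ((({u, v} : Finset (V n))) : Set (V n)) = ({u, v} : Set (V n)) := by simp
  rw [h3] at h1
  omega

lemma exists_span_pair (C : Submodule (ZMod 2) (V n)) (h : Module.finrank (ZMod 2) C ≤ 2) :
    ∃ u v : V n, C = span (ZMod 2) {u, v} := by
  have hfin : Module.Finite (ZMod 2) C := Module.Finite.of_injective C.subtype Subtype.val_injective
  obtain ⟨k, hk⟩ : ∃ k, Module.finrank (ZMod 2) C = k := ⟨_, rfl⟩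
  rw [hk] at h
  let b : Module.Basis (Fin k) (ZMod 2) C := (Module.finBasis (ZMod 2) C).reindex (finCongr hk)
  have hC : C = span (ZMod 2) (Subtype.val '' Set.range ⇑b) := by
    conv_lhs => rw [← Submodule.map_subtype_top C, ← b.span_eq, Submodule.map_span]
    rfl
  interval_cases k
  · refine ⟨0, 0, hC.trans ?_⟩
    rw [Set.range_eq_empty, Set.image_empty, span_empty]
    rw [show ({0, 0} : Set (V n)) = {(0 : V n)} by simp, Submodule.span_zero_singleton]
  · refine ⟨(b 0 : V n), (b 0 : V n), hC.trans ?_⟩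
    congr 1
    ext x
    simp [Set.range_unique]
  · refine ⟨(b 0 : V n), (b 1 : V n), hC.trans ?_⟩
    congr 1
    ext x
    simp only [Set.mem_image, Set.mem_range, Fin.exists_fin_two, Set.mem_insert_iff,
      Set.mem_singleton_iff]
    constructor
    · rintro ⟨y, (h | h), rfl⟩
      · exact Or.inl (by rw [h])
      · exact Or.inr (by rw [h])
    · rintro (h | h)
      · exact ⟨b 0, Or.inl rfl, h.symm⟩
      · exact ⟨b 1, Or.inr rfl, h.symm⟩


lemma exists_perm_of_fiber_card_eq {α β : Type*} [Fintype α] (f g : α → β)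
    (h : ∀ b, Nat.card {a // f a = b} = Nat.card {a // g a = b}) :
    ∃ σ : Equiv.Perm α, ∀ a, g (σ a) = f a := by
  have e : ∀ b, {a // f a = b} ≃ {a // g a = b} := fun b =>
    Fintype.equivOfCardEq (by
      have := h b
      rwa [Nat.card_eq_fintype_card, Nat.card_eq_fintype_card] at this)
  refine ⟨(Equiv.sigmaFiberEquiv f).symm.trans
    ((Equiv.sigmaCongrRight e).trans (Equiv.sigmaFiberEquiv g)), ?_⟩
  intro a
  exact (e (f a) ⟨a, rfl⟩).2

lemma exists_perm_pattern {s t s' t' : Finset (Fin n)}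
    (ha : (s ∩ t).card = (s' ∩ t').card) (hb : (s \ t).card = (s' \ t').card)
    (hc : (t \ s).card = (t' \ s').card) :
    ∃ σ : Equiv.Perm (Fin n), (∀ i, σ i ∈ s' ↔ i ∈ s) ∧ (∀ i, σ i ∈ t' ↔ i ∈ t) := by
  classical
  set f : Fin n → Bool × Bool := fun i => (decide (i ∈ s), decide (i ∈ t)) with hf
  set g : Fin n → Bool × Bool := fun i => (decide (i ∈ s'), decide (i ∈ t')) with hg
  have hu : (s ∪ t).card = (s' ∪ t').card := by
    have e1 := Finset.card_union_add_card_inter s t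
    have e2 := Finset.card_union_add_card_inter s' t'
    have e3 := Finset.card_inter_add_card_sdiff s t
    have e4 := Finset.card_inter_add_card_sdiff s' t'
    have e5 := Finset.card_inter_add_card_sdiff t s
    have e6 := Finset.card_inter_add_card_sdiff t' s'
    have e7 : (t ∩ s).card = (s ∩ t).card := by rw [Finset.inter_comm]
    have e8 : (t' ∩ s').card = (s' ∩ t').card := by rw [Finset.inter_comm]
    omega
  have key : ∀ b : Bool × Bool, Nat.card {a // f a = b} = Nat.card {a // g a = b} := by
    intro b
    rw [Nat.card_eq_fintype_card, Fintype.card_subtype, Nat.card_eq_fintype_card,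
      Fintype.card_subtype]
    rcases b with ⟨b1, b2⟩
    cases b1 <;> cases b2
    · have h1 : (Finset.univ.filter fun i => f i = (false, false)) = (s ∪ t)ᶜ := by
        ext i
        simp [hf, Prod.ext_iff, not_or]
      have h2 : (Finset.univ.filter fun i => g i = (false, false)) = (s' ∪ t')ᶜ := by
        ext i
        simp [hg, Prod.ext_iff, not_or]
      rw [h1, h2, Finset.card_compl, Finset.card_compl, hu]
    · have h1 : (Finset.univ.filter fun i => f i = (false, true)) = t \ s := by
        ext i
        simp [hf, Prod.ext_iff, Finset.mem_sdiff, and_comm]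
      have h2 : (Finset.univ.filter fun i => g i = (false, true)) = t' \ s' := by
        ext i
        simp [hg, Prod.ext_iff, Finset.mem_sdiff, and_comm]
      rw [h1, h2, hc]
    · have h1 : (Finset.univ.filter fun i => f i = (true, false)) = s \ t := by
        ext i
        simp [hf, Prod.ext_iff, Finset.mem_sdiff]
      have h2 : (Finset.univ.filter fun i => g i = (true, false)) = s' \ t' := by
        ext i
        simp [hg, Prod.ext_iff, Finset.mem_sdiff]
      rw [h1, h2, hb]
    · have h1 : (Finset.univ.filter fun i => f i = (true, true)) = s ∩ t := by
        ext i
        simp [hf, Prod.ext_iff, Finset.mem_inter]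
      have h2 : (Finset.univ.filter fun i => g i = (true, true)) = s' ∩ t' := by
        ext i
        simp [hg, Prod.ext_iff, Finset.mem_inter]
      rw [h1, h2, ha]
  obtain ⟨σ, hσ⟩ := exists_perm_of_fiber_card_eq f g key
  refine ⟨σ, fun i => ?_, fun i => ?_⟩
  · have := congrArg Prod.fst (hσ i)
    simpa [hf, hg, decide_eq_decide] using this
  · have := congrArg Prod.snd (hσ i)
    simpa [hf, hg, decide_eq_decide] using this


lemma map_span_pair (σ : Equiv.Perm (Fin n)) {s t s' t' : Finset (Fin n)}
    (hs : ∀ i, σ i ∈ s' ↔ i ∈ s) (ht : ∀ i, σ i ∈ t' ↔ i ∈ t) :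
    Submodule.map (LinearMap.funLeft (ZMod 2) (ZMod 2) ⇑σ)
      (span (ZMod 2) {indic s', indic t'}) = span (ZMod 2) {indic s, indic t} := by
  rw [Submodule.map_span, Set.image_pair]
  have h1 : LinearMap.funLeft (ZMod 2) (ZMod 2) ⇑σ (indic s') = indic s := by
    funext i
    rw [LinearMap.funLeft_apply]
    simp only [indic]
    rw [if_congr (hs i) rfl rfl]
  have h2 : LinearMap.funLeft (ZMod 2) (ZMod 2) ⇑σ (indic t') = indic t := by
    funext i
    rw [LinearMap.funLeft_apply]
    simp only [indic]
    rw [if_congr (ht i) rfl rfl]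
  rw [h1, h2]

lemma exists_pattern (a b c : ℕ) (h : a + b + c ≤ n) :
    ∃ s t : Finset (Fin n), (s ∩ t).card = a ∧ (s \ t).card = b ∧ (t \ s).card = c := by
  obtain ⟨W, -, hW⟩ := Finset.exists_subset_card_eq
    (show a + b + c ≤ (Finset.univ : Finset (Fin n)).card by simpa)
  obtain ⟨S, hSW, hS⟩ := Finset.exists_subset_card_eq (show a + b ≤ W.card by omega)
  obtain ⟨A, hAS, hA⟩ := Finset.exists_subset_card_eq (show a ≤ S.card by omega)
  refine ⟨S, A ∪ (W \ S), ?_, ?_, ?_⟩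
  · have : S ∩ (A ∪ (W \ S)) = A := by
      ext i
      simp only [Finset.mem_inter, Finset.mem_union, Finset.mem_sdiff]
      constructor
      · rintro ⟨hiS, hiA | ⟨-, hiS'⟩⟩
        · exact hiA
        · exact absurd hiS hiS'
      · intro hiA
        exact ⟨hAS hiA, Or.inl hiA⟩
    rw [this, hA]
  · have : S \ (A ∪ (W \ S)) = S \ A := by
      ext i
      simp only [Finset.mem_sdiff, Finset.mem_union, not_or, Finset.mem_sdiff]
      tauto
    rw [this, Finset.card_sdiff_of_subset hAS, hS, hA]
    omega
  · have : (A ∪ (W \ S)) \ S = W \ S := by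
      ext i
      simp only [Finset.mem_sdiff, Finset.mem_union]
      constructor
      · rintro ⟨hiA | hiWS, hiS⟩
        · exact absurd (hAS hiA) hiS
        · exact hiWS
      · intro hi
        exact ⟨Or.inr hi, hi.2⟩
    rw [this, Finset.card_sdiff_of_subset hSW, hW, hS]
    omega


noncomputable def J (C : Submodule (ZMod 2) (V n)) : Multiset ℕ :=
  ((C : Set (V n)).toFinset).val.map wt

lemma wt_funLeft (σ : Equiv.Perm (Fin n)) (x : V n) :
    wt (LinearMap.funLeft (ZMod 2) (ZMod 2) ⇑σ x) = wt x := by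
  unfold wt
  exact Finset.card_equiv σ (fun i => by simp only [Finset.mem_filter]; simp [LinearMap.funLeft_apply])

lemma J_map (σ : Equiv.Perm (Fin n)) (C : Submodule (ZMod 2) (V n)) :
    J (Submodule.map (LinearMap.funLeft (ZMod 2) (ZMod 2) ⇑σ) C) = J C := by
  unfold J
  have hinj : Function.Injective (LinearMap.funLeft (ZMod 2) (ZMod 2) ⇑σ) :=
    LinearMap.funLeft_injective_of_surjective _ _ _ σ.surjective
  have hset : ((Submodule.map (LinearMap.funLeft (ZMod 2) (ZMod 2) ⇑σ) C : Submodule (ZMod 2) (V n)) : Set (V n))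
      = (LinearMap.funLeft (ZMod 2) (ZMod 2) ⇑σ) '' (C : Set (V n)) := Submodule.map_coe _ _
  have h1 : ((Submodule.map (LinearMap.funLeft (ZMod 2) (ZMod 2) ⇑σ) C : Submodule (ZMod 2) (V n)) : Set (V n)).toFinset
      = Finset.image (LinearMap.funLeft (ZMod 2) (ZMod 2) ⇑σ) (C : Set (V n)).toFinset := by
    rw [Set.toFinset_congr hset, Set.toFinset_image]
  rw [h1, Finset.image_val_of_injOn (hinj.injOn)]
  rw [Multiset.map_map]
  exact Multiset.map_congr rfl fun x _ => wt_funLeft σ x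

lemma coe_span_pair (u v : V n) :
    ((span (ZMod 2) {u, v} : Submodule (ZMod 2) (V n)) : Set (V n)) = {0, u, v, u + v} := by
  ext x
  simp only [SetLike.mem_coe, Submodule.mem_span_pair, Set.mem_insert_iff,
    Set.mem_singleton_iff]
  constructor
  · rintro ⟨a, b, rfl⟩
    rcases zmod2_cases a with rfl | rfl <;> rcases zmod2_cases b with rfl | rfl <;>
      simp [zero_smul, one_smul]
  · rintro (rfl | rfl | rfl | rfl)
    · exact ⟨0, 0, by simp⟩
    · exact ⟨1, 0, by simp⟩
    · exact ⟨0, 1, by simp⟩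
    · exact ⟨1, 1, by simp⟩

lemma coe_span_singleton (v : V n) :
    ((span (ZMod 2) {v} : Submodule (ZMod 2) (V n)) : Set (V n)) = {0, v} := by
  ext x
  simp only [SetLike.mem_coe, Submodule.mem_span_singleton, Set.mem_insert_iff,
    Set.mem_singleton_iff]
  constructor
  · rintro ⟨a, rfl⟩
    rcases zmod2_cases a with rfl | rfl <;> simp
  · rintro (rfl | rfl)
    · exact ⟨0, by simp⟩
    · exact ⟨1, by simp⟩

lemma J_bot : J (⊥ : Submodule (ZMod 2) (V n)) = {0} := by
  unfold J
  have h : ((⊥ : Submodule (ZMod 2) (V n)) : Set (V n)) = {0} := Submodule.bot_coe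
  rw [Set.toFinset_congr h, Set.toFinset_singleton]
  simp [wt]

lemma J_span_singleton {v : V n} (hv : v ≠ 0) :
    J (span (ZMod 2) {v}) = {0, wt v} := by
  unfold J
  rw [Set.toFinset_congr (coe_span_singleton v)]
  rw [Set.toFinset_insert, Set.toFinset_singleton]
  rw [Finset.insert_val_of_notMem (by simp [hv.symm])]
  simp [wt]

lemma J_span_pair {u v : V n} (hu : u ≠ 0) (hv : v ≠ 0) (huv : u ≠ v) :
    J (span (ZMod 2) {u, v}) = {0, wt u, wt v, wt (u + v)} := by
  have h1 : u + v ≠ 0 := by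
    intro h
    apply huv
    have := congrArg (· + v) h
    simpa [add_assoc, add_self_eq_zero'] using this
  have h2 : u + v ≠ u := by
    intro h
    exact hv (add_left_cancel (h.trans (add_zero u).symm))
  have h3 : u + v ≠ v := by
    intro h
    exact hu (add_right_cancel (h.trans (zero_add v).symm))
  have hwt0 : wt (0 : V n) = 0 := by simp [wt]
  unfold J
  rw [Set.toFinset_congr (coe_span_pair u v), Set.toFinset_insert, Set.toFinset_insert,
    Set.toFinset_insert, Set.toFinset_singleton]
  rw [Finset.insert_val_of_notMem
    (by simp [Ne.symm hu, Ne.symm hv, Ne.symm h1])]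
  rw [Finset.insert_val_of_notMem
    (by simp [huv, Ne.symm h2])]
  rw [Finset.insert_val_of_notMem
    (by simp [Ne.symm h3])]
  simp [hwt0]


lemma std_selfOrth (s t : Finset (Fin n)) (ha : 2 ∣ (s ∩ t).card) (hb : 2 ∣ (s \ t).card)
    (hc : 2 ∣ (t \ s).card) :
    ∀ x ∈ span (ZMod 2) {indic s, indic t}, ∀ y ∈ span (ZMod 2) {indic s, indic t},
      ∑ i, x i * y i = 0 := by
  have hs : 2 ∣ s.card := by
    have := Finset.card_inter_add_card_sdiff s t
    omega
  have ht : 2 ∣ t.card := by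
    have h1 := Finset.card_inter_add_card_sdiff t s
    have h2 : (t ∩ s).card = (s ∩ t).card := by rw [Finset.inter_comm]
    omega
  apply span_selfOrth
  · rw [dot_indic, Finset.inter_self]
    exact (ZMod.natCast_eq_zero_iff _ 2).mpr hs
  · rw [dot_indic]
    exact (ZMod.natCast_eq_zero_iff _ 2).mpr ha
  · rw [dot_indic, Finset.inter_self]
    exact (ZMod.natCast_eq_zero_iff _ 2).mpr ht

lemma symmDiff_inter_left (s t : Finset (Fin n)) : s ∩ (s ∆ t) = s \ t := by
  ext i; simp [Finset.mem_symmDiff]; tauto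

lemma symmDiff_sdiff_left (s t : Finset (Fin n)) : s \ (s ∆ t) = s ∩ t := by
  ext i; simp [Finset.mem_symmDiff]

lemma symmDiff_sdiff_right (s t : Finset (Fin n)) : (s ∆ t) \ s = t \ s := by
  ext i; simp [Finset.mem_symmDiff]

lemma span_symmDiff_left (s t : Finset (Fin n)) :
    span (ZMod 2) {indic s, indic (s ∆ t)} = span (ZMod 2) {indic s, indic t} := by
  rw [← indic_add, span_pair_add]

lemma span_symmDiff_right (s t : Finset (Fin n)) :
    span (ZMod 2) {indic t, indic (s ∆ t)} = span (ZMod 2) {indic s, indic t} := by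
  rw [symmDiff_comm, ← indic_add, span_pair_add, span_pair_comm]

lemma ms12 (x y z : ℕ) : ({y, x, z} : Multiset ℕ) = {x, y, z} :=
  Multiset.cons_swap y x {z}

lemma ms23 (x y z : ℕ) : ({x, z, y} : Multiset ℕ) = {x, y, z} :=
  congrArg (x ::ₘ ·) (Multiset.cons_swap z y 0)

lemma m_cab (x y z : ℕ) : ({z, x, y} : Multiset ℕ) = {x, y, z} :=
  (ms12 x z y).trans (ms23 x y z)

lemma m_bca (x y z : ℕ) : ({y, z, x} : Multiset ℕ) = {x, y, z} :=
  ((ms23 y z x).symm.trans (ms12 x y z) : _)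

lemma m_cba (x y z : ℕ) : ({z, y, x} : Multiset ℕ) = {x, y, z} :=
  (ms12 y z x).trans (m_bca x y z)

lemma exists_sorted_pair (s t : Finset (Fin n)) :
    ∃ s' t' : Finset (Fin n),
      span (ZMod 2) {indic s', indic t'} = span (ZMod 2) {indic s, indic t} ∧
      (s' ∩ t').card ≤ (s' \ t').card ∧ (s' \ t').card ≤ (t' \ s').card ∧
      (({(s' ∩ t').card, (s' \ t').card, (t' \ s').card} : Multiset ℕ) =
        {(s ∩ t).card, (s \ t).card, (t \ s).card}) := by
  have e1 : (t ∩ s).card = (s ∩ t).card := by rw [Finset.inter_comm]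
  have e2 : (s ∩ (s ∆ t)).card = (s \ t).card := by rw [symmDiff_inter_left]
  have e3 : (s \ (s ∆ t)).card = (s ∩ t).card := by rw [symmDiff_sdiff_left]
  have e4 : ((s ∆ t) \ s).card = (t \ s).card := by rw [symmDiff_sdiff_right]
  have e5 : ((s ∆ t) ∩ s).card = (s \ t).card := by
    rw [Finset.inter_comm, symmDiff_inter_left]
  have e6 : (t ∩ (s ∆ t)).card = (t \ s).card := by
    rw [show s ∆ t = t ∆ s from symmDiff_comm s t, symmDiff_inter_left]
  have e7 : (t \ (s ∆ t)).card = (s ∩ t).card := by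
    rw [show s ∆ t = t ∆ s from symmDiff_comm s t, symmDiff_sdiff_left, Finset.inter_comm]
  have e8 : ((s ∆ t) \ t).card = (s \ t).card := by
    rw [show s ∆ t = t ∆ s from symmDiff_comm s t, symmDiff_sdiff_right]
  have e9 : ((s ∆ t) ∩ t).card = (t \ s).card := by rw [Finset.inter_comm]; exact e6
  rcases le_total ((s ∩ t).card) ((s \ t).card) with hab | hab
  · rcases le_total ((s \ t).card) ((t \ s).card) with hbc | hbc
    · exact ⟨s, t, rfl, hab, hbc, rfl⟩
    · rcases le_total ((s ∩ t).card) ((t \ s).card) with hac | hac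
      · refine ⟨t, s, span_pair_comm _ _, ?_, ?_, ?_⟩
        · rw [e1]; exact hac
        · exact hbc
        · rw [e1]; exact ms23 _ _ _
      · refine ⟨t, s ∆ t, span_symmDiff_right s t, ?_, ?_, ?_⟩
        · rw [e6, e7]; exact hac
        · rw [e7, e8]; exact hab
        · rw [e6, e7, e8]; exact m_cab _ _ _
  · rcases le_total ((s ∩ t).card) ((t \ s).card) with hac | hac
    · refine ⟨s, s ∆ t, span_symmDiff_left s t, ?_, ?_, ?_⟩
      · rw [e2, e3]; exact hab
      · rw [e3, e4]; exact hac
      · rw [e2, e3, e4]; exact ms12 _ _ _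
    · rcases le_total ((s \ t).card) ((t \ s).card) with hbc | hbc
      · refine ⟨s ∆ t, s, (span_pair_comm _ _).trans (span_symmDiff_left s t), ?_, ?_, ?_⟩
        · rw [e5, e4]; exact hbc
        · rw [e4, e3]; exact hac
        · rw [e5, e4, e3]; exact m_bca _ _ _
      · refine ⟨s ∆ t, t, (span_pair_comm _ _).trans (span_symmDiff_right s t), ?_, ?_, ?_⟩
        · rw [e9, e8]; exact hbc
        · rw [e8, e7]; exact hab
        · rw [e9, e8, e7]; exact m_cba _ _ _


lemma indic_injective : Function.Injective (indic (n := n)) := by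
  intro s t h
  ext i
  have hi := congrFun h i
  simp only [indic] at hi
  by_cases hs : i ∈ s <;> by_cases ht : i ∈ t <;> simp [hs, ht] at hi ⊢

lemma card_symmDiff' (s t : Finset (Fin n)) :
    (s ∆ t).card = (s \ t).card + (t \ s).card := by
  rw [show s ∆ t = (s \ t) ∪ (t \ s) from symmDiff_def s t]
  exact Finset.card_union_of_disjoint disjoint_sdiff_sdiff

lemma J_std {s t : Finset (Fin n)} {p₁ p₂ p₃ : ℕ} (h12 : p₁ ≤ p₂) (h23 : p₂ ≤ p₃)
    (ha : (s ∩ t).card = 2 * p₁) (hb : (s \ t).card = 2 * p₂) (hc : (t \ s).card = 2 * p₃) :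
    J (span (ZMod 2) {indic s, indic t}) =
      if p₃ = 0 then {0}
      else if p₂ = 0 then {0, 2 * p₁ + 2 * p₃}
      else {0, 2 * p₁ + 2 * p₂, 2 * p₁ + 2 * p₃, 2 * p₂ + 2 * p₃} := by
  have hs_card : s.card = 2 * p₁ + 2 * p₂ := by
    have := Finset.card_inter_add_card_sdiff s t; omega
  have ht_card : t.card = 2 * p₁ + 2 * p₃ := by
    have h1 := Finset.card_inter_add_card_sdiff t s
    have h2 : (t ∩ s).card = (s ∩ t).card := by rw [Finset.inter_comm]
    omega
  by_cases hp3 : p₃ = 0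
  ·
    have hp2 : p₂ = 0 := by omega
    have hp1 : p₁ = 0 := by omega
    have hs0 : s = ∅ := Finset.card_eq_zero.mp (by omega)
    have ht0 : t = ∅ := Finset.card_eq_zero.mp (by omega)
    rw [hs0, ht0, indic_eq_zero, if_pos hp3]
    rw [show ({(0 : V n), 0} : Set (V n)) = {(0 : V n)} by simp, Submodule.span_zero_singleton]
    exact J_bot
  · rw [if_neg hp3]
    by_cases hp2 : p₂ = 0
    · rw [if_pos hp2]
      have hp1 : p₁ = 0 := by omega
      have hs0 : s = ∅ := Finset.card_eq_zero.mp (by omega)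
      have htne : t.Nonempty := Finset.card_pos.mp (by omega)
      rw [hs0, indic_eq_zero]
      rw [show ({(0 : V n), indic t} : Set (V n)) = insert 0 {indic t} from rfl,
        Submodule.span_insert_zero]
      rw [J_span_singleton (indic_ne_zero htne), wt_indic, ht_card]
    · rw [if_neg hp2]
      have hsne : s.Nonempty := Finset.card_pos.mp (by omega)
      have htne : t.Nonempty := Finset.card_pos.mp (by omega)
      have hst : s ≠ t := by
        intro h
        rw [h] at hb
        simp at hb
        omega
      rw [J_span_pair (indic_ne_zero hsne) (indic_ne_zero htne)
        (fun h => hst (indic_injective h))]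
      rw [wt_indic, indic_add, wt_indic, wt_indic, hs_card, ht_card, card_symmDiff', hb, hc]

lemma sorted3 {x₁ x₂ x₃ y₁ y₂ y₃ : ℕ} (hx12 : x₁ ≤ x₂) (hx23 : x₂ ≤ x₃)
    (hy12 : y₁ ≤ y₂) (hy23 : y₂ ≤ y₃)
    (h : ({x₁, x₂, x₃} : Multiset ℕ) = {y₁, y₂, y₃}) : x₁ = y₁ ∧ x₂ = y₂ ∧ x₃ = y₃ := by
  have hl : ([x₁, x₂, x₃] : Multiset ℕ) = ([y₁, y₂, y₃] : Multiset ℕ) := h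
  have hperm : [x₁, x₂, x₃].Perm [y₁, y₂, y₃] := Multiset.coe_eq_coe.mp hl
  have s1 : List.Pairwise (· ≤ ·) [x₁, x₂, x₃] := by simp [List.pairwise_cons]; omega
  have s2 : List.Pairwise (· ≤ ·) [y₁, y₂, y₃] := by simp [List.pairwise_cons]; omega
  have heq : [x₁, x₂, x₃] = [y₁, y₂, y₃] := List.Perm.eq_of_pairwise' s1 s2 hperm
  simp at heq
  exact heq

lemma triple_eq {p₁ p₂ p₃ q₁ q₂ q₃ : ℕ} (hp12 : p₁ ≤ p₂) (hp23 : p₂ ≤ p₃)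
    (hq12 : q₁ ≤ q₂) (hq23 : q₂ ≤ q₃)
    (h : (if p₃ = 0 then ({0} : Multiset ℕ)
      else if p₂ = 0 then {0, 2 * p₁ + 2 * p₃}
      else {0, 2 * p₁ + 2 * p₂, 2 * p₁ + 2 * p₃, 2 * p₂ + 2 * p₃}) =
      (if q₃ = 0 then ({0} : Multiset ℕ)
      else if q₂ = 0 then {0, 2 * q₁ + 2 * q₃}
      else {0, 2 * q₁ + 2 * q₂, 2 * q₁ + 2 * q₃, 2 * q₂ + 2 * q₃})) :
    p₁ = q₁ ∧ p₂ = q₂ ∧ p₃ = q₃ := by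
  by_cases hp3 : p₃ = 0
  · by_cases hq3 : q₃ = 0
    · omega
    · exfalso
      rw [if_pos hp3, if_neg hq3] at h
      by_cases hq2 : q₂ = 0
      · rw [if_pos hq2] at h
        have := congrArg Multiset.card h
        simp at this
      · rw [if_neg hq2] at h
        have := congrArg Multiset.card h
        simp at this
  · by_cases hq3 : q₃ = 0
    · exfalso
      rw [if_neg hp3, if_pos hq3] at h
      by_cases hp2 : p₂ = 0
      · rw [if_pos hp2] at h
        have := congrArg Multiset.card h
        simp at this
      · rw [if_neg hp2] at h
        have := congrArg Multiset.card h
        simp at this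
    · rw [if_neg hp3, if_neg hq3] at h
      by_cases hp2 : p₂ = 0 <;> by_cases hq2 : q₂ = 0
      · rw [if_pos hp2, if_pos hq2] at h
        simp only [Multiset.insert_eq_cons, Multiset.cons_inj_right, Multiset.singleton_inj] at h
        omega
      · exfalso
        rw [if_pos hp2, if_neg hq2] at h
        have := congrArg Multiset.card h
        simp at this
      · exfalso
        rw [if_neg hp2, if_pos hq2] at h
        have := congrArg Multiset.card h
        simp at this
      · rw [if_neg hp2, if_neg hq2] at h
        simp only [Multiset.insert_eq_cons, Multiset.cons_inj_right] at h
        have := sorted3 (by omega) (by omega) (by omega) (by omega) h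
        omega


end SO13

open SO13 in
theorem stmt13 (n : ℕ) :
    Nat.card (Quot (fun C₁ C₂ : {C : Submodule (ZMod 2) (Fin n → ZMod 2) //
        Module.finrank (ZMod 2) C ≤ 2 ∧ ∀ x ∈ C, ∀ y ∈ C, ∑ i, x i * y i = 0} =>
          ∃ σ : Equiv.Perm (Fin n),
            (C₂ : Submodule (ZMod 2) (Fin n → ZMod 2)) =
              Submodule.map (LinearMap.funLeft (ZMod 2) (ZMod 2) ⇑σ) C₁)) =
      Nat.card {p : ℕ × ℕ × ℕ //
        p.1 ≤ p.2.1 ∧ p.2.1 ≤ p.2.2 ∧ p.1 + p.2.1 + p.2.2 ≤ n / 2} := by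
  classical
  have hex : ∀ p : {p : ℕ × ℕ × ℕ //
      p.1 ≤ p.2.1 ∧ p.2.1 ≤ p.2.2 ∧ p.1 + p.2.1 + p.2.2 ≤ n / 2},
      ∃ s t : Finset (Fin n), (s ∩ t).card = 2 * p.1.1 ∧ (s \ t).card = 2 * p.1.2.1 ∧
        (t \ s).card = 2 * p.1.2.2 := by
    intro p
    apply exists_pattern
    have h1 := p.2.2.2
    omega
  choose sf tf hsa hsb hsc using hex
  have hresp : ∀ (C₁ C₂ : {C : Submodule (ZMod 2) (Fin n → ZMod 2) //
      Module.finrank (ZMod 2) C ≤ 2 ∧ ∀ x ∈ C, ∀ y ∈ C, ∑ i, x i * y i = 0}),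
      (∃ σ : Equiv.Perm (Fin n),
        (C₂ : Submodule (ZMod 2) (Fin n → ZMod 2)) =
          Submodule.map (LinearMap.funLeft (ZMod 2) (ZMod 2) ⇑σ) C₁) →
      J C₁.1 = J C₂.1 := by
    rintro C₁ C₂ ⟨σ, hσ⟩
    rw [show (C₂ : Submodule (ZMod 2) (Fin n → ZMod 2)) = C₂.1 from rfl] at hσ
    rw [hσ, J_map]
  refine (Nat.card_eq_of_bijective (fun p => Quot.mk _
    ⟨span (ZMod 2) {indic (sf p), indic (tf p)},
      finrank_span_pair_le _ _,
      std_selfOrth _ _ ⟨_, hsa p⟩ ⟨_, hsb p⟩ ⟨_, hsc p⟩⟩) ⟨?_, ?_⟩).symm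
  · -- injective
    intro p q hpq
    have hJ := congrArg (Quot.lift (fun C => J C.1) hresp) hpq
    simp only [Quot.lift_mk] at hJ
    rw [J_std p.2.1 p.2.2.1 (hsa p) (hsb p) (hsc p),
      J_std q.2.1 q.2.2.1 (hsa q) (hsb q) (hsc q)] at hJ
    obtain ⟨h1, h2, h3⟩ := triple_eq p.2.1 p.2.2.1 q.2.1 q.2.2.1 hJ
    apply Subtype.ext
    exact Prod.ext h1 (Prod.ext h2 h3)
  · -- surjective
    intro x
    obtain ⟨C, rfl⟩ := Quot.exists_rep x
    obtain ⟨u, v, hC⟩ := exists_span_pair C.1 C.2.1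
    set s : Finset (Fin n) := Finset.univ.filter (fun i => u i = 1) with hs_def
    set t : Finset (Fin n) := Finset.univ.filter (fun i => v i = 1) with ht_def
    have hu : u = indic s := (indic_supp u).symm
    have hv : v = indic t := (indic_supp v).symm
    have hC' : C.1 = span (ZMod 2) {indic s, indic t} := by rw [hC, hu, hv]
    have hu_mem : u ∈ C.1 := by
      rw [hC]; exact subset_span (by simp)
    have hv_mem : v ∈ C.1 := by
      rw [hC]; exact subset_span (by simp)
    have horth := C.2.2
    have hss : 2 ∣ s.card := by
      have hd := horth u hu_mem u hu_mem
      rw [hu, dot_indic, Finset.inter_self] at hd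
      exact (ZMod.natCast_eq_zero_iff _ 2).mp hd
    have htt : 2 ∣ t.card := by
      have hd := horth v hv_mem v hv_mem
      rw [hv, dot_indic, Finset.inter_self] at hd
      exact (ZMod.natCast_eq_zero_iff _ 2).mp hd
    have hst : 2 ∣ (s ∩ t).card := by
      have hd := horth u hu_mem v hv_mem
      rw [hu, hv, dot_indic] at hd
      exact (ZMod.natCast_eq_zero_iff _ 2).mp hd
    have hsd : 2 ∣ (s \ t).card := by
      have := Finset.card_inter_add_card_sdiff s t
      omega
    have htd : 2 ∣ (t \ s).card := by
      have h1 := Finset.card_inter_add_card_sdiff t s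
      have h2 : (t ∩ s).card = (s ∩ t).card := by rw [Finset.inter_comm]
      omega
    obtain ⟨s', t', hspan, h12, h23, hmul⟩ := exists_sorted_pair s t
    have e1 : (s' ∩ t').card ∈ ({(s ∩ t).card, (s \ t).card, (t \ s).card} : Multiset ℕ) := by
      rw [← hmul]; simp
    have e2 : (s' \ t').card ∈ ({(s ∩ t).card, (s \ t).card, (t \ s).card} : Multiset ℕ) := by
      rw [← hmul]; simp
    have e3 : (t' \ s').card ∈ ({(s ∩ t).card, (s \ t).card, (t \ s).card} : Multiset ℕ) := by
      rw [← hmul]; simp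
    simp only [Multiset.insert_eq_cons, Multiset.mem_cons, Multiset.mem_singleton] at e1 e2 e3
    have ev1 : 2 ∣ (s' ∩ t').card := by rcases e1 with h | h | h <;> omega
    have ev2 : 2 ∣ (s' \ t').card := by rcases e2 with h | h | h <;> omega
    have ev3 : 2 ∣ (t' \ s').card := by rcases e3 with h | h | h <;> omega
    have hsum : (s' ∩ t').card + (s' \ t').card + (t' \ s').card =
        (s ∩ t).card + (s \ t).card + (t \ s).card := by
      have := congrArg Multiset.sum hmul
      simp only [Multiset.insert_eq_cons, Multiset.sum_cons, Multiset.sum_singleton] at this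
      omega
    have hub : (s ∩ t).card + (s \ t).card + (t \ s).card ≤ n := by
      have h1 := Finset.card_union_add_card_inter s t
      have h2 := Finset.card_inter_add_card_sdiff s t
      have h3 := Finset.card_inter_add_card_sdiff t s
      have h4 : (t ∩ s).card = (s ∩ t).card := by rw [Finset.inter_comm]
      have h5 : (s ∪ t).card ≤ n := le_trans (Finset.card_le_univ _) (by simp)
      omega
    have hpmem : ((s' ∩ t').card / 2, (s' \ t').card / 2, (t' \ s').card / 2).1 ≤
          ((s' ∩ t').card / 2, (s' \ t').card / 2, (t' \ s').card / 2).2.1 ∧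
        ((s' ∩ t').card / 2, (s' \ t').card / 2, (t' \ s').card / 2).2.1 ≤
          ((s' ∩ t').card / 2, (s' \ t').card / 2, (t' \ s').card / 2).2.2 ∧
        ((s' ∩ t').card / 2, (s' \ t').card / 2, (t' \ s').card / 2).1 +
          ((s' ∩ t').card / 2, (s' \ t').card / 2, (t' \ s').card / 2).2.1 +
          ((s' ∩ t').card / 2, (s' \ t').card / 2, (t' \ s').card / 2).2.2 ≤ n / 2 := by
      refine ⟨?_, ?_, ?_⟩ <;> simp only <;> omega
    refine ⟨⟨_, hpmem⟩, ?_⟩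
    apply Quot.sound
    have ea : (sf ⟨_, hpmem⟩ ∩ tf ⟨_, hpmem⟩).card = (s' ∩ t').card := by
      rw [hsa ⟨_, hpmem⟩]; simp only; omega
    have eb : (sf ⟨_, hpmem⟩ \ tf ⟨_, hpmem⟩).card = (s' \ t').card := by
      rw [hsb ⟨_, hpmem⟩]; simp only; omega
    have ec : (tf ⟨_, hpmem⟩ \ sf ⟨_, hpmem⟩).card = (t' \ s').card := by
      rw [hsc ⟨_, hpmem⟩]; simp only; omega
    obtain ⟨σ, hσs, hσt⟩ := exists_perm_pattern ea.symm eb.symm ec.symm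
    exact ⟨σ, by rw [hC', ← hspan, ← map_span_pair σ hσs hσt]⟩
end

section
/- Let P be an n×n permutation matrix over F_2, A ∈ GL(k, F_2), B ∈ GL(l, F_2), and suppose the characteristic polynomials of A and B^{-1} are coprime in F_2[x]. If X ∈ M_{k×n}(F_2) and Y ∈ M_{l×n}(F_2) satisfy AX = XP, BY = YP, XX^T = 0, and YY^T = 0, then XY^T = 0 and the stacked matrix [X; Y] satisfies (A⊕B)[X;Y] = [X;Y]P and [X;Y][X;Y]^T = 0. -/
open Matrix Polynomial

lemma perm_mul_transpose {n : ℕ} {R : Type*} [CommRing R] (σ : Equiv.Perm (Fin n)) :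
    (σ.permMatrix R) * (σ.permMatrix R)ᵀ = 1 := by
  ext i j
  by_cases h : i = j <;>
    simp [Matrix.mul_apply, PEquiv.toMatrix_apply, Equiv.toPEquiv_apply, Matrix.one_apply,
      Finset.sum_ite_eq, h, σ.injective.eq_iff, eq_comm, Equiv.eq_symm_apply]

lemma mycharpoly_transpose {m : ℕ} {R : Type*} [CommRing R] (M : Matrix (Fin m) (Fin m) R) :
    (Mᵀ).charpoly = M.charpoly := by
  rw [Matrix.charpoly, Matrix.charpoly, ← Matrix.det_transpose]
  congr 1
  ext i j
  by_cases h : i = j <;>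
    simp [Matrix.charmatrix_apply, Matrix.transpose_apply, Matrix.one_apply, h, eq_comm,
      Matrix.diagonal_apply]

lemma aeval_conj {k l : ℕ} {R : Type*} [CommRing R]
    (a : Matrix (Fin k) (Fin k) R) (b : Matrix (Fin l) (Fin l) R)
    (m : Matrix (Fin k) (Fin l) R) (h : a * m = m * b) (p : R[X]) :
    (aeval a p) * m = m * (aeval b p) := by
  induction p using Polynomial.induction_on' with
  | add p q hp hq => rw [map_add, map_add, Matrix.add_mul, Matrix.mul_add, hp, hq]
  | monomial i c =>
      simp only [aeval_monomial]
      have hpow : ∀ i : ℕ, a ^ i * m = m * b ^ i := by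
        intro i
        induction i with
        | zero => simp
        | succ i ih => rw [pow_succ, pow_succ, Matrix.mul_assoc, h, ← Matrix.mul_assoc, ih, Matrix.mul_assoc]
      simp [Algebra.algebraMap_eq_smul_one, smul_mul_assoc, mul_smul_comm, hpow]

theorem stmt17 (n k l : ℕ) (P : Matrix (Fin n) (Fin n) (ZMod 2))
    (hP : ∃ σ : Equiv.Perm (Fin n), P = σ.permMatrix (ZMod 2))
    (A : Matrix (Fin k) (Fin k) (ZMod 2)) (hA : IsUnit A)
    (B : Matrix (Fin l) (Fin l) (ZMod 2)) (hB : IsUnit B)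
    (hcop : IsCoprime A.charpoly (B⁻¹).charpoly)
    (X : Matrix (Fin k) (Fin n) (ZMod 2)) (Y : Matrix (Fin l) (Fin n) (ZMod 2))
    (hX : A * X = X * P) (hY : B * Y = Y * P)
    (hXX : X * Xᵀ = 0) (hYY : Y * Yᵀ = 0) :
    X * Yᵀ = 0 ∧
      Matrix.fromBlocks A 0 0 B * Matrix.fromRows X Y = Matrix.fromRows X Y * P ∧
      Matrix.fromRows X Y * (Matrix.fromRows X Y)ᵀ = 0 := by
  obtain ⟨σ, rfl⟩ := hP
  have hPPt : (σ.permMatrix (ZMod 2)) * (σ.permMatrix (ZMod 2))ᵀ = 1 := perm_mul_transpose σ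
  have key : A * (X * Yᵀ) * Bᵀ = X * Yᵀ := by
    have : A * (X * Yᵀ) * Bᵀ = (A * X) * (B * Y)ᵀ := by
      simp [Matrix.transpose_mul, Matrix.mul_assoc]
    rw [this, hX, hY, Matrix.transpose_mul, Matrix.mul_assoc, ← Matrix.mul_assoc
      (σ.permMatrix (ZMod 2)), hPPt, Matrix.one_mul]
  have hBinv : B⁻¹ * B = 1 := Matrix.nonsing_inv_mul B (Matrix.isUnit_iff_isUnit_det B |>.mp hB)
  have hconj : A * (X * Yᵀ) = (X * Yᵀ) * (B⁻¹)ᵀ := by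
    calc A * (X * Yᵀ) = A * (X * Yᵀ) * Bᵀ * (B⁻¹)ᵀ := by
          rw [Matrix.mul_assoc, ← Matrix.transpose_mul, hBinv]; simp
      _ = (X * Yᵀ) * (B⁻¹)ᵀ := by rw [key]
  have hct : ((B⁻¹)ᵀ).charpoly = (B⁻¹).charpoly := mycharpoly_transpose _
  obtain ⟨u, v, huv⟩ := hcop
  have hM0 : X * Yᵀ = 0 := by
    have h1 : (aeval A A.charpoly) * (X * Yᵀ) = (X * Yᵀ) * (aeval ((B⁻¹)ᵀ) A.charpoly) :=
      aeval_conj A ((B⁻¹)ᵀ) (X * Yᵀ) hconj _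
    rw [Matrix.aeval_self_charpoly, Matrix.zero_mul] at h1
    have h2 : aeval ((B⁻¹)ᵀ) ((B⁻¹).charpoly) = 0 := by
      rw [← hct]; exact Matrix.aeval_self_charpoly _
    have huv' : A.charpoly * u + (B⁻¹).charpoly * v = 1 := by
      rw [mul_comm u, mul_comm v] at huv; exact huv
    have h3 := congrArg (fun p => (X * Yᵀ) * aeval ((B⁻¹)ᵀ) p) huv'
    simpa [_root_.map_add, _root_.map_mul, _root_.map_one, Matrix.mul_add,
      ← Matrix.mul_assoc, ← h1, h2] using h3.symm
  refine ⟨hM0, ?_, ?_⟩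
  · rw [Matrix.fromBlocks_mul_fromRows, Matrix.fromRows_mul, hX, hY]
    simp
  · rw [Matrix.transpose_fromRows, Matrix.fromRows_mul_fromCols, hXX, hYY, hM0]
    have h4 : Y * Xᵀ = 0 := by
      have := congrArg Matrix.transpose hM0
      simpa using this
    rw [h4, Matrix.fromBlocks_zero]
end
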